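/- Let 𝒜 be a central hyperplane arrangement in a finite-dimensional real vector space V, for each H ∈ 𝒜 fix a linear functional α_H ∈ V* with ker α_H = H, and let k be a natural number. Define U_{𝒜,k} = { (x₁,…,x_k) ∈ V^k | ∃ H ∈ 𝒜, ∀ i, x_i ∉ H } and A_{𝒜,k} = ⋃_{H ∈ 𝒜} { (x₁,…,x_k) ∈ V^k : |α_H(x_i)| ≥ 1 for all i }. Then the inclusion A_{𝒜,k} ↪ U_{𝒜,k} admits a deformation retraction r : U_{𝒜,k} → A_{𝒜,k}; in particular, the inclusion A_{𝒜,k} ↪ U_{𝒜,k} is a homotopy equivalence. -/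

import Mathlib

open Set

section Arrangement

variable {V : Type*} [NormedAddCommGroup V] [NormedSpace ℝ V]

/-- A (linear) hyperplane: the kernel of a nonzero linear functional. -/
def IsHyperplane (H : Submodule ℝ V) : Prop :=
  ∃ f : V →ₗ[ℝ] ℝ, f ≠ 0 ∧ LinearMap.ker f = H

/-- A central hyperplane arrangement: a finite set of linear hyperplanes. -/
def IsCentralArrangement (𝒜 : Finset (Submodule ℝ V)) : Prop :=
  ∀ H ∈ 𝒜, IsHyperplane H

/-- The complement of the union of the hyperplanes of `𝒜`. -/
def arrComplement (𝒜 : Finset (Submodule ℝ V)) : Set V :=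
  {x | ∀ H ∈ 𝒜, x ∉ H}

/-- The set of chambers of `𝒜`: connected components of the complement. -/
def Chambers (𝒜 : Finset (Submodule ℝ V)) : Set (Set V) :=
  {c | ∃ x ∈ arrComplement 𝒜, c = connectedComponentIn (arrComplement 𝒜) x}

/-- A chamber of `𝒜`. -/
abbrev Chamber (𝒜 : Finset (Submodule ℝ V)) := ↥(Chambers 𝒜)

/-- A chosen point of a chamber. -/
noncomputable def Chamber.pt {𝒜 : Finset (Submodule ℝ V)} (c : Chamber 𝒜) : V :=
  c.2.choose

lemma Chamber.pt_mem {𝒜 : Finset (Submodule ℝ V)} (c : Chamber 𝒜) :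
    c.pt ∈ arrComplement 𝒜 := c.2.choose_spec.1

/-- `ε_H` : the chamber of the one-hyperplane arrangement `{H}` containing a
given chamber of `𝒜` (for `H ∈ 𝒜`). -/
noncomputable def epsC {𝒜 : Finset (Submodule ℝ V)} (H : Submodule ℝ V) (hH : H ∈ 𝒜)
    (c : Chamber 𝒜) : Chamber ({H} : Finset (Submodule ℝ V)) :=
  ⟨connectedComponentIn (arrComplement ({H} : Finset (Submodule ℝ V))) c.pt, by
    refine ⟨c.pt, ?_, rfl⟩
    intro H' hH'
    rw [Finset.mem_singleton] at hH'
    subst hH'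
    exact c.pt_mem _ hH⟩

/-- IIA for a map `Ch(𝒜)^m → Ch(𝒜)^l`. -/
def SatisfiesIIA {𝒜 : Finset (Submodule ℝ V)} {m l : ℕ}
    (Φ : (Fin m → Chamber 𝒜) → (Fin l → Chamber 𝒜)) : Prop :=
  ∀ (H : Submodule ℝ V) (hH : H ∈ 𝒜),
    ∃ φ : (Fin m → Chamber ({H} : Finset (Submodule ℝ V))) →
          (Fin l → Chamber ({H} : Finset (Submodule ℝ V))),
      ∀ c : Fin m → Chamber 𝒜,
        φ (fun i => epsC H hH (c i)) = fun j => epsC H hH (Φ c j)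

/-- IIA for a map `Ch(𝒜)^m → Ch(𝒜)`. -/
def SatisfiesIIA1 {𝒜 : Finset (Submodule ℝ V)} {m : ℕ}
    (Φ : (Fin m → Chamber 𝒜) → Chamber 𝒜) : Prop :=
  ∀ (H : Submodule ℝ V) (hH : H ∈ 𝒜),
    ∃ φ : (Fin m → Chamber ({H} : Finset (Submodule ℝ V))) →
          Chamber ({H} : Finset (Submodule ℝ V)),
      ∀ c : Fin m → Chamber 𝒜,
        φ (fun i => epsC H hH (c i)) = epsC H hH (Φ c)

/-- IIA for a map `Ch(𝒜) → Ch(𝒜)`. -/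
def SatisfiesIIAone {𝒜 : Finset (Submodule ℝ V)}
    (f : Chamber 𝒜 → Chamber 𝒜) : Prop :=
  ∀ (H : Submodule ℝ V) (hH : H ∈ 𝒜),
    ∃ φ : Chamber ({H} : Finset (Submodule ℝ V)) → Chamber ({H} : Finset (Submodule ℝ V)),
      ∀ c : Chamber 𝒜, φ (epsC H hH c) = epsC H hH (f c)

/-- Pareto property. -/
def SatisfiesPAR {𝒜 : Finset (Submodule ℝ V)} {m : ℕ}
    (Φ : (Fin m → Chamber 𝒜) → Chamber 𝒜) : Prop :=
  ∀ c : Chamber 𝒜, Φ (fun _ => c) = c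

/-- Admissible map: IIA and PAR. -/
def Admissible {𝒜 : Finset (Submodule ℝ V)} {m : ℕ}
    (Φ : (Fin m → Chamber 𝒜) → Chamber 𝒜) : Prop :=
  SatisfiesIIA1 Φ ∧ SatisfiesPAR Φ

/-- The rank `r(𝒜) = dim V − dim ⋂_{H ∈ 𝒜} H`. -/
noncomputable def arrRank (𝒜 : Finset (Submodule ℝ V)) : ℕ :=
  Module.finrank ℝ V - Module.finrank ℝ ↥(𝒜.inf id)

/-- Decomposability of a central arrangement. -/
def Decomposable (𝒜 : Finset (Submodule ℝ V)) : Prop :=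
  ∃ (n : ℕ) (parts : Fin n → Finset (Submodule ℝ V)),
    2 ≤ n ∧
    (∀ i, (parts i).Nonempty) ∧
    (∀ i j H, H ∈ parts i → H ∈ parts j → i = j) ∧
    (∀ H, H ∈ 𝒜 ↔ ∃ i, H ∈ parts i) ∧
    arrRank 𝒜 = ∑ i, arrRank (parts i)

/-- A dependent subarrangement: `r(ℬ) < |ℬ|`. -/
def Dependent (ℬ : Finset (Submodule ℝ V)) : Prop := arrRank ℬ < ℬ.card

/-- A circuit: a minimal dependent subarrangement. -/
def IsCircuit (ℬ : Finset (Submodule ℝ V)) : Prop :=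
  Dependent ℬ ∧ ∀ ℬ' ⊆ ℬ, Dependent ℬ' → ℬ' = ℬ

/-- The graph `Γ(𝒜)`: vertices are the hyperplanes of `𝒜`, with an edge between two
distinct hyperplanes iff some circuit of `𝒜` contains both. -/
def circuitGraph (𝒜 : Finset (Submodule ℝ V)) : SimpleGraph {H // H ∈ 𝒜} where
  Adj H H' := H ≠ H' ∧ ∃ ℬ ⊆ 𝒜, IsCircuit ℬ ∧ H.1 ∈ ℬ ∧ H'.1 ∈ ℬ
  symm := by
    constructor
    rintro a b ⟨hne, ℬ, hsub, hcirc, ha, hb⟩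
    exact ⟨hne.symm, ℬ, hsub, hcirc, hb, ha⟩
  loopless := by
    constructor
    rintro a ⟨h, -⟩
    exact h rfl

/-- `H` separates a set `T ⊆ Ch(𝒜)^m` if the image of `T` under `(ε_H)^m` has at
least two elements. -/
def SeparationOf {𝒜 : Finset (Submodule ℝ V)} {m : ℕ} (H : Submodule ℝ V) (hH : H ∈ 𝒜)
    (T : Set (Fin m → Chamber 𝒜)) : Prop :=
  ∃ t₁ ∈ T, ∃ t₂ ∈ T,
    (fun i => epsC H hH (t₁ i)) ≠ (fun i => epsC H hH (t₂ i))

end Arrangement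

/-- `U_{𝒜,k}`: tuples all of whose entries avoid some common hyperplane of `𝒜`. -/
def Uset {V : Type*} [NormedAddCommGroup V] [NormedSpace ℝ V]
    (𝒜 : Finset (Submodule ℝ V)) (k : ℕ) : Set (Fin k → V) :=
  {x | ∃ H ∈ 𝒜, ∀ i, x i ∉ H}

/-- `A_{𝒜,k}`: tuples all of whose entries satisfy `|α_H(xᵢ)| ≥ 1` for some
common hyperplane `H ∈ 𝒜`. -/
def Aset {V : Type*} [NormedAddCommGroup V] [NormedSpace ℝ V]
    (𝒜 : Finset (Submodule ℝ V)) (α : {H // H ∈ 𝒜} → (V →ₗ[ℝ] ℝ)) (k : ℕ) :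
    Set (Fin k → V) :=
  {x | ∃ H : {H // H ∈ 𝒜}, ∀ i, 1 ≤ |α H (x i)|}

/-- The inclusion `A_{𝒜,k} ↪ U_{𝒜,k}` admits a deformation retraction
`r : U_{𝒜,k} → A_{𝒜,k}`; in particular the inclusion is a homotopy
equivalence. -/
theorem Aset_deformation_retract_of_Uset
    {V : Type*} [NormedAddCommGroup V] [NormedSpace ℝ V] [FiniteDimensional ℝ V]
    (𝒜 : Finset (Submodule ℝ V)) (h𝒜 : IsCentralArrangement 𝒜)
    (α : {H // H ∈ 𝒜} → (V →ₗ[ℝ] ℝ)) (hα : ∀ H, LinearMap.ker (α H) = H.1)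
    (k : ℕ) :
    ∃ h : Aset 𝒜 α k ⊆ Uset 𝒜 k,
      (∃ r : C(↥(Uset 𝒜 k), ↥(Aset 𝒜 α k)),
        (∀ a : ↥(Aset 𝒜 α k), r (Set.inclusion h a) = a) ∧
        ContinuousMap.Homotopic
          ((⟨Set.inclusion h, continuous_inclusion h⟩ :
              C(↥(Aset 𝒜 α k), ↥(Uset 𝒜 k))).comp r)
          (ContinuousMap.id ↥(Uset 𝒜 k))) ∧
      ∃ e : ContinuousMap.HomotopyEquiv ↥(Aset 𝒜 α k) ↥(Uset 𝒜 k),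
        ⇑e.toFun = Set.inclusion h := by
    -- membership criterion
  have hmem : ∀ (H : {H // H ∈ 𝒜}) (v : V), v ∈ H.1 ↔ α H v = 0 := by
    intro H v; rw [← hα H, LinearMap.mem_ker]
  have h : Aset 𝒜 α k ⊆ Uset 𝒜 k := by
    rintro x ⟨H, hH⟩
    refine ⟨H.1, H.2, fun i hi => ?_⟩
    have h0 := (hmem H (x i)).1 hi
    have h1 := hH i
    rw [h0, abs_zero] at h1
    linarith
  rcases 𝒜.eq_empty_or_nonempty with rfl | h𝒜ne
  · -- empty case
    have hUe : IsEmpty ↥(Uset (∅ : Finset (Submodule ℝ V)) k) := by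
      constructor; rintro ⟨x, H, hH, -⟩; exact absurd hH (Finset.notMem_empty H)
    have hAe : IsEmpty ↥(Aset (∅ : Finset (Submodule ℝ V)) α k) := by
      constructor; rintro ⟨x, H, -⟩; exact absurd H.2 (Finset.notMem_empty H.1)
    refine ⟨h, ⟨⟨fun y => isEmptyElim y, ?_⟩, fun a => isEmptyElim a, ?_⟩,
      ⟨⟨⟨fun a => isEmptyElim a, ?_⟩, ⟨fun y => isEmptyElim y, ?_⟩, ?_, ?_⟩, ?_⟩⟩
    · rw [continuous_iff_continuousAt]; exact fun y => isEmptyElim y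
    · exact ⟨⟨⟨fun p => isEmptyElim p.2, by
        rw [continuous_iff_continuousAt]; exact fun p => isEmptyElim p.2⟩,
        fun x => isEmptyElim x, fun x => isEmptyElim x⟩⟩
    · rw [continuous_iff_continuousAt]; exact fun a => isEmptyElim a
    · rw [continuous_iff_continuousAt]; exact fun y => isEmptyElim y
    · exact ⟨⟨⟨fun p => isEmptyElim p.2, by
        rw [continuous_iff_continuousAt]; exact fun p => isEmptyElim p.2⟩,
        fun x => isEmptyElim x, fun x => isEmptyElim x⟩⟩
    · exact ⟨⟨⟨fun p => isEmptyElim p.2, by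
        rw [continuous_iff_continuousAt]; exact fun p => isEmptyElim p.2⟩,
        fun x => isEmptyElim x, fun x => isEmptyElim x⟩⟩
    · ext a; exact isEmptyElim a
  -- main case
  have hattne : 𝒜.attach.Nonempty := h𝒜ne.attach
  -- the function g
  set g : {H // H ∈ 𝒜} → (Fin k → V) → ℝ := fun H x =>
    (Finset.univ : Finset (Option (Fin k))).inf' Finset.univ_nonempty
      (fun o => o.elim 1 (fun i => min |α H (x i)| 1)) with hg
  set m : (Fin k → V) → ℝ := fun x => 𝒜.attach.sup' hattne (fun H => g H x) with hmdef
  have hαcont : ∀ H, Continuous (α H) := fun H => (α H).continuous_of_finiteDimensional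
  have hgcont : ∀ H, Continuous (g H) := by
    intro H
    apply Continuous.finset_inf'_apply Finset.univ_nonempty
    rintro (_ | i) -
    · exact continuous_const
    · exact ((hαcont H).comp (continuous_apply i)).abs.min continuous_const
  have hmcont : Continuous m :=
    Continuous.finset_sup'_apply hattne fun H _ => hgcont H
  have hg_le_one : ∀ H x, g H x ≤ 1 := by
    intro H x
    exact Finset.inf'_le (fun o : Option (Fin k) => o.elim 1 (fun i => min |α H (x i)| 1))
      (Finset.mem_univ none)
  have hg_le : ∀ H x i, g H x ≤ |α H (x i)| := by
    intro H x i
    have h2 : g H x ≤ min |α H (x i)| 1 :=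
      Finset.inf'_le (fun o : Option (Fin k) => o.elim 1 (fun i => min |α H (x i)| 1))
        (Finset.mem_univ (some i))
    exact le_trans h2 (min_le_left _ _)
  have hm_le_one : ∀ x, m x ≤ 1 := by
    intro x; exact Finset.sup'_le _ _ fun H _ => hg_le_one H x
  have hm_pos : ∀ x ∈ Uset 𝒜 k, 0 < m x := by
    rintro x ⟨H, hH, hxH⟩
    have hgpos : 0 < g ⟨H, hH⟩ x := by
      rw [hg]
      rw [Finset.lt_inf'_iff]
      rintro (_ | i) -
      · exact one_pos
      · refine lt_min ?_ one_pos
        rw [abs_pos]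
        intro h0
        exact hxH i ((hmem ⟨H, hH⟩ (x i)).2 h0)
    exact lt_of_lt_of_le hgpos (Finset.le_sup' (fun H => g H x) (Finset.mem_attach _ ⟨H, hH⟩))
  -- scaling stays in U
  have hU_smul : ∀ (c : ℝ), c ≠ 0 → ∀ x ∈ Uset 𝒜 k, (c • x) ∈ Uset 𝒜 k := by
    rintro c hc x ⟨H, hH, hxH⟩
    refine ⟨H, hH, fun i hi => ?_⟩
    have : α ⟨H, hH⟩ ((c • x) i) = 0 := (hmem ⟨H, hH⟩ _).1 hi
    simp only [Pi.smul_apply, map_smul, smul_eq_mul] at this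
    rcases mul_eq_zero.1 this with h1 | h1
    · exact hc h1
    · exact hxH i ((hmem ⟨H, hH⟩ (x i)).2 h1)
  -- retraction lands in A
  have hr_mem : ∀ x ∈ Uset 𝒜 k, ((m x)⁻¹ • x) ∈ Aset 𝒜 α k := by
    intro x hx
    obtain ⟨H, -, hHeq⟩ := Finset.exists_mem_eq_sup' hattne (fun H => g H x)
    refine ⟨H, fun i => ?_⟩
    have hpos := hm_pos x hx
    have h1 : m x ≤ |α H (x i)| := le_trans (le_of_eq hHeq) (hg_le H x i)
    have : |α H (((m x)⁻¹ • x) i)| = (m x)⁻¹ * |α H (x i)| := by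
      simp [abs_mul, abs_of_pos (inv_pos.2 hpos)]
    rw [this]
    calc (1:ℝ) = (m x)⁻¹ * m x := by rw [inv_mul_cancel₀ hpos.ne']
      _ ≤ (m x)⁻¹ * |α H (x i)| :=
        mul_le_mul_of_nonneg_left h1 (inv_pos.2 hpos).le
  have hm_eq_one : ∀ x ∈ Aset 𝒜 α k, m x = 1 := by
    rintro x ⟨H, hH⟩
    refine le_antisymm (hm_le_one x) ?_
    have : g H x = 1 := by
      refine le_antisymm (hg_le_one H x) ?_
      rw [hg, Finset.le_inf'_iff]
      rintro (_ | i) -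
      · exact le_refl 1
      · exact le_min (hH i) le_rfl
    calc (1:ℝ) = g H x := this.symm
      _ ≤ m x := Finset.le_sup' (fun H => g H x) (Finset.mem_attach _ H)
  -- the retraction
  have hrcont : Continuous fun y : ↥(Uset 𝒜 k) => (m y.1)⁻¹ • y.1 :=
    ((hmcont.comp continuous_subtype_val).inv₀
      (fun y => (hm_pos y.1 y.2).ne')).smul continuous_subtype_val
  set r : C(↥(Uset 𝒜 k), ↥(Aset 𝒜 α k)) :=
    ⟨fun y => ⟨(m y.1)⁻¹ • y.1, hr_mem y.1 y.2⟩, hrcont.subtype_mk _⟩ with hrdef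
  have hret : ∀ a : ↥(Aset 𝒜 α k), r (Set.inclusion h a) = a := by
    intro a
    apply Subtype.ext
    show (m a.1)⁻¹ • a.1 = a.1
    rw [hm_eq_one a.1 a.2, inv_one, one_smul]
  -- the homotopy
  have hfac : ∀ (t : unitInterval) (y : Fin k → V), y ∈ Uset 𝒜 k →
      (0 : ℝ) < (1 - t) + t * (m y)⁻¹ := by
    intro t y hy
    have h1 : (1:ℝ) ≤ (m y)⁻¹ := (one_le_inv₀ (hm_pos y hy)).2 (hm_le_one y)
    nlinarith [t.2.1, t.2.2, hm_pos y hy]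
  have Fmem : ∀ (p : unitInterval × ↥(Uset 𝒜 k)),
      (((1 - (p.1 : ℝ)) + p.1 * (m p.2.1)⁻¹) • p.2.1) ∈ Uset 𝒜 k :=
    fun p => hU_smul _ (hfac p.1 p.2.1 p.2.2).ne' p.2.1 p.2.2
  have Fcont : Continuous fun p : unitInterval × ↥(Uset 𝒜 k) =>
      (((1 - (p.1 : ℝ)) + p.1 * (m p.2.1)⁻¹) • p.2.1) := by
    have hc1 : Continuous fun p : unitInterval × ↥(Uset 𝒜 k) => (p.1 : ℝ) :=
      continuous_subtype_val.comp continuous_fst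
    have hminv : Continuous fun p : unitInterval × ↥(Uset 𝒜 k) => (m p.2.1)⁻¹ :=
      ((hmcont.comp (continuous_subtype_val.comp continuous_snd)).inv₀
        (fun p => (hm_pos p.2.1 p.2.2).ne'))
    exact ((continuous_const.sub hc1).add (hc1.mul hminv)).smul
      (continuous_subtype_val.comp continuous_snd)
  set F : ContinuousMap.Homotopy (ContinuousMap.id ↥(Uset 𝒜 k))
      ((⟨Set.inclusion h, continuous_inclusion h⟩ :
          C(↥(Aset 𝒜 α k), ↥(Uset 𝒜 k))).comp r) :=
    { toFun := fun p => ⟨((1 - (p.1 : ℝ)) + p.1 * (m p.2.1)⁻¹) • p.2.1, Fmem p⟩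
      continuous_toFun := Fcont.subtype_mk _
      map_zero_left := by intro y; apply Subtype.ext; show _ • _ = _; norm_num
      map_one_left := by
        intro y; apply Subtype.ext
        show ((1 - (1:ℝ)) + 1 * (m y.1)⁻¹) • y.1 = (m y.1)⁻¹ • y.1
        norm_num } with hF
  have hhtp : ContinuousMap.Homotopic
      ((⟨Set.inclusion h, continuous_inclusion h⟩ :
          C(↥(Aset 𝒜 α k), ↥(Uset 𝒜 k))).comp r)
      (ContinuousMap.id ↥(Uset 𝒜 k)) := ⟨F.symm⟩
  refine ⟨h, ⟨r, hret, hhtp⟩,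
    ⟨⟨⟨Set.inclusion h, continuous_inclusion h⟩, r, ?_, hhtp⟩, rfl⟩⟩
  have : r.comp (⟨Set.inclusion h, continuous_inclusion h⟩ :
      C(↥(Aset 𝒜 α k), ↥(Uset 𝒜 k))) = ContinuousMap.id _ := by
    apply ContinuousMap.ext
    exact fun a => hret a
  rw [this]
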